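/- arXiv:0912.2670 — 4 statements merged into one kernel-verified Lean document; each statement's English description precedes it below -/
import Mathlib

section
/- If b, c, d are odd integers with gcd(b,c) = 1 and (-d)^5 = b^2 - 2c^2, then there exist an integer j with -2 ≤ j ≤ 2 and coprime integers u, v such that b + c√2 = (1 + √2)^j (u + v√2)^5 in Z[√2]. -/
/-!
Rounding the coordinates of `a * star b / N b` makes `ℤ√2` norm-Euclidean, hence a PID.
Since `b` is odd, `gcd b c = 1` and the norm `-d⁵` is odd, `z = b + c√2` and its conjugate
generate the unit ideal; their product is `(-d)⁵`, so `z` is a unit times a fifth power. Every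
unit is `±(1 + √2)ⁿ`, and `-1` and `(1 + √2)⁵` are fifth powers, which leaves `(1 + √2)ʲ`
with `|j| ≤ 2`.
-/

/-- The fundamental unit `1 + √2` of `ℤ[√2]`. -/
def sqrt2Unit : (Zsqrtd 2)ˣ :=
  ⟨⟨1, 1⟩, ⟨-1, 1⟩, by ext <;> simp [Zsqrtd.re_mul, Zsqrtd.im_mul],
    by ext <;> simp [Zsqrtd.re_mul, Zsqrtd.im_mul]⟩

namespace Int

theorem two_mul_abs_sub_round_div_mul_le (x : ℤ) {n : ℤ} (hn : n ≠ 0) :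
    2 * |x - round (x / n : ℚ) * n| ≤ |n| := by
  have hround : |(x / n : ℚ) - round (x / n : ℚ)| * |(n : ℚ)| ≤ 1 / 2 * |(n : ℚ)| :=
    mul_le_mul_of_nonneg_right (abs_sub_round _) (abs_nonneg _)
  rw [← abs_mul, sub_mul, div_mul_cancel₀ _ (by exact_mod_cast hn)] at hround
  exact_mod_cast (by linarith : 2 * |(x - round (x / n : ℚ) * n : ℚ)| ≤ |(n : ℚ)|)

end Int

namespace Zsqrtd

variable {d : ℤ}

noncomputable def roundDiv (a b : ℤ√d) : ℤ√d :=
  ⟨round ((a * star b).re / b.norm : ℚ), round ((a * star b).im / b.norm : ℚ)⟩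

theorem sub_roundDiv_mul_mul_star (a b : ℤ√d) :
    (a - roundDiv a b * b) * star b =
      ⟨(a * star b).re - (roundDiv a b).re * b.norm,
        (a * star b).im - (roundDiv a b).im * b.norm⟩ := by
  rw [sub_mul, mul_assoc, ← norm_eq_mul_conj]
  ext <;> simp

theorem natAbs_norm_sub_roundDiv_mul_lt (hd : ∀ n : ℤ, d ≠ n * n) (hd₂ : |d| ≤ 2)
    (a : ℤ√d) {b : ℤ√d} (hb : b ≠ 0) :
    (a - roundDiv a b * b).norm.natAbs < b.norm.natAbs := by
  set r := a - roundDiv a b * b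
  set n := b.norm
  have hn : n ≠ 0 := fun h => hb ((norm_eq_zero hd b).mp h)
  obtain ⟨e₁, e₂, he⟩ : ∃ e₁ e₂ : ℤ, r * star b = ⟨e₁, e₂⟩ ∧ 2 * |e₁| ≤ |n| ∧ 2 * |e₂| ≤ |n| :=
    ⟨_, _, sub_roundDiv_mul_mul_star a b,
      Int.two_mul_abs_sub_round_div_mul_le _ hn, Int.two_mul_abs_sub_round_div_mul_le _ hn⟩
  have hnorm : r.norm * n = e₁ ^ 2 - d * e₂ ^ 2 := by
    have h := congrArg norm he.1
    rw [norm_mul, norm_conj] at h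
    rw [h, norm_def]
    ring
  have h₁ : 4 * e₁ ^ 2 ≤ n ^ 2 := by
    rw [← sq_abs e₁, ← sq_abs n]; nlinarith [abs_nonneg e₁]
  have h₂ : 4 * e₂ ^ 2 ≤ n ^ 2 := by
    rw [← sq_abs e₂, ← sq_abs n]; nlinarith [abs_nonneg e₂]
  -- the rounding errors `e₁, e₂` are at most `|n| / 2`, and `1 + |d| < 4`
  have hbound : |r.norm * n| < |n| * |n| := by
    have hn₂ : 0 < n ^ 2 := by positivity
    calc |r.norm * n| = |e₁ ^ 2 - d * e₂ ^ 2| := by rw [hnorm]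
      _ ≤ e₁ ^ 2 + |d| * e₂ ^ 2 := by
        have h := abs_sub (e₁ ^ 2) (d * e₂ ^ 2)
        rwa [abs_mul, abs_sq, abs_sq] at h
      _ < |n| * |n| := by rw [abs_mul_abs_self, ← sq]; nlinarith [sq_nonneg e₂]
  zify
  exact lt_of_mul_lt_mul_right (abs_mul r.norm n ▸ hbound) (abs_nonneg n)

noncomputable abbrev euclideanDomain (hd : ∀ n : ℤ, d ≠ n * n) (hd₂ : |d| ≤ 2) :
    EuclideanDomain (ℤ√d) :=
  { (inferInstance : CommRing (ℤ√d)), (inferInstance : Nontrivial (ℤ√d)) with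
    quotient := roundDiv
    quotient_zero := fun a => by ext <;> simp [roundDiv]
    remainder := fun a b => a - roundDiv a b * b
    quotient_mul_add_remainder_eq := fun a b => by ring
    r := fun x y => x.norm.natAbs < y.norm.natAbs
    r_wellFounded := (measure fun z : ℤ√d => z.norm.natAbs).wf
    remainder_lt := natAbs_norm_sub_roundDiv_mul_lt hd hd₂
    mul_left_not_lt := fun a b hb => by
      have hb' : b.norm.natAbs ≠ 0 := by simpa [norm_eq_zero hd] using hb
      simpa [norm_mul, Int.natAbs_mul] using Nat.le_mul_of_pos_right _ (Nat.pos_of_ne_zero hb') }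

theorem gcd_re_im_eq_one_of_dvd {z w : ℤ√d} (hw : w ∣ z) (hz : Int.gcd z.re z.im = 1) :
    Int.gcd w.re w.im = 1 := by
  have hg : ((Int.gcd w.re w.im : ℤ) : ℤ√d) ∣ z :=
    ((intCast_dvd _ _).mpr ⟨Int.gcd_dvd_left .., Int.gcd_dvd_right ..⟩).trans hw
  obtain ⟨hre, him⟩ := (intCast_dvd _ _).mp hg
  exact Nat.dvd_one.mp (by exact_mod_cast hz ▸ Int.dvd_coe_gcd hre him)

theorem isCoprime_self_star {z : ℤ√d} (hre : IsCoprime z.re (d * z.im))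
    (hnorm : IsCoprime 2 z.norm) : IsCoprime z (star z) := by
  obtain ⟨s, t, hst⟩ := hre
  obtain ⟨u, v, huv⟩ := hnorm
  refine ⟨(u : ℤ√d) * ((s : ℤ√d) + (t : ℤ√d) * sqrtd) + (v : ℤ√d) * star z,
    (u : ℤ√d) * ((s : ℤ√d) - (t : ℤ√d) * sqrtd), ?_⟩
  -- `z + star z = 2 re z` and `(z - star z) * √d = 2 d im z`
  have h2 : (2 : ℤ√d) = (s : ℤ√d) * (z + star z) + (t : ℤ√d) * ((z - star z) * sqrtd) := by
    ext <;> simp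
    linear_combination -2 * hst
  have h1 : (1 : ℤ√d) = u * 2 + v * z.norm := by exact_mod_cast huv.symm
  rw [norm_eq_mul_conj, h2] at h1
  linear_combination -h1

theorem norm_eq_one_or_neg_one (u : (ℤ√d)ˣ) : (u : ℤ√d).norm = 1 ∨ (u : ℤ√d).norm = -1 :=
  Int.isUnit_iff.mp ((isUnit_iff_norm_isUnit _).mp u.isUnit)

end Zsqrtd

noncomputable instance : EuclideanDomain (ℤ√2) :=
  Zsqrtd.euclideanDomain
    (fun n h => by
      rcases le_or_gt |n| 1 with h1 | h1 <;> nlinarith [abs_mul_abs_self n, abs_nonneg n])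
    (by norm_num)

theorem val_mul_sqrt2Unit_inv (u : (ℤ√2)ˣ) :
    ((u * sqrt2Unit⁻¹ : (ℤ√2)ˣ) : ℤ√2) =
      ⟨2 * (u : ℤ√2).im - (u : ℤ√2).re, (u : ℤ√2).re - (u : ℤ√2).im⟩ := by
  ext <;> simp [sqrt2Unit] <;> ring

theorem exists_eq_sqrt2Unit_pow_of_re_pos_of_im_nonneg (u : (ℤ√2)ˣ) (hre : 0 < (u : ℤ√2).re)
    (him : 0 ≤ (u : ℤ√2).im) : ∃ n : ℕ, u = sqrt2Unit ^ n := by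
  induction h : (u : ℤ√2).im.toNat using Nat.strong_induction_on generalizing u with
  | _ k ih =>
  have hnorm := Zsqrtd.norm_eq_one_or_neg_one u
  rw [Zsqrtd.norm_def] at hnorm
  rcases him.eq_or_lt with him | him
  · refine ⟨0, Units.ext ?_⟩
    have : (u : ℤ√2).re = 1 := by rcases hnorm with h | h <;> nlinarith
    ext <;> simp [this, ← him]
  -- `(a + b√2) / (1 + √2) = (2b - a) + (a - b)√2`, and `0 ≤ a - b < b` by the norm equation
  · have hlt : (u : ℤ√2).re < 2 * (u : ℤ√2).im := by rcases hnorm with h | h <;> nlinarith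
    have hle : (u : ℤ√2).im ≤ (u : ℤ√2).re := by rcases hnorm with h | h <;> nlinarith
    obtain ⟨n, hn⟩ := ih ((u : ℤ√2).re - (u : ℤ√2).im).toNat (by omega) (u * sqrt2Unit⁻¹)
      (by simp only [val_mul_sqrt2Unit_inv]; omega) (by simp only [val_mul_sqrt2Unit_inv]; omega)
      (by simp only [val_mul_sqrt2Unit_inv])
    exact ⟨n + 1, by rw [pow_succ, ← hn, inv_mul_cancel_right]⟩

theorem exists_eq_sqrt2Unit_zpow_of_re_pos (u : (ℤ√2)ˣ) (hre : 0 < (u : ℤ√2).re) :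
    ∃ n : ℤ, u = sqrt2Unit ^ n ∨ u = -sqrt2Unit ^ n := by
  rcases le_or_gt 0 (u : ℤ√2).im with him | him
  · obtain ⟨n, rfl⟩ := exists_eq_sqrt2Unit_pow_of_re_pos_of_im_nonneg u hre him
    exact ⟨n, Or.inl (zpow_natCast _ _).symm⟩
  obtain ⟨w, hw⟩ := u.isUnit.star
  obtain ⟨n, rfl⟩ := exists_eq_sqrt2Unit_pow_of_re_pos_of_im_nonneg w (by rwa [hw])
    (by rw [hw]; exact (neg_pos.mpr him).le)
  have hmul : ((u * sqrt2Unit ^ n : (ℤ√2)ˣ) : ℤ√2) = (u : ℤ√2).norm := by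
    rw [Units.val_mul, hw, Zsqrtd.norm_eq_mul_conj]
  refine ⟨-n, ?_⟩
  rw [zpow_neg, zpow_natCast]
  rcases Zsqrtd.norm_eq_one_or_neg_one u with h | h <;> rw [h] at hmul
  · exact Or.inl (eq_inv_of_mul_eq_one_left (Units.ext (by simpa using hmul)))
  · refine Or.inr (neg_eq_iff_eq_neg.mp (eq_inv_of_mul_eq_one_left (Units.ext ?_)))
    rw [neg_mul, Units.val_neg, hmul, Units.val_one, Int.cast_neg, Int.cast_one, neg_neg]

theorem exists_eq_sqrt2Unit_zpow (u : (ℤ√2)ˣ) :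
    ∃ n : ℤ, u = sqrt2Unit ^ n ∨ u = -sqrt2Unit ^ n := by
  have hre : (u : ℤ√2).re ≠ 0 := by
    intro h
    rcases Zsqrtd.norm_eq_one_or_neg_one u with hn | hn <;>
      simp only [Zsqrtd.norm_def, h, zero_mul, zero_sub, mul_assoc] at hn <;> omega
  rcases hre.lt_or_gt with hre | hre
  · obtain ⟨n, hn | hn⟩ := exists_eq_sqrt2Unit_zpow_of_re_pos (-u) (by simpa using hre)
    · exact ⟨n, Or.inr (neg_eq_iff_eq_neg.mp hn)⟩
    · exact ⟨n, Or.inl (neg_inj.mp hn)⟩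
  · exact exists_eq_sqrt2Unit_zpow_of_re_pos u hre

theorem exists_eq_sqrt2Unit_zpow_mul_pow_five (u : (ℤ√2)ˣ) :
    ∃ j : ℤ, -2 ≤ j ∧ j ≤ 2 ∧ ∃ v : (ℤ√2)ˣ, u = sqrt2Unit ^ j * v ^ 5 := by
  obtain ⟨n, hn⟩ := exists_eq_sqrt2Unit_zpow u
  have hsplit :
      sqrt2Unit ^ n = sqrt2Unit ^ ((n + 2) % 5 - 2) * (sqrt2Unit ^ ((n + 2) / 5)) ^ 5 := by
    rw [← zpow_natCast, ← zpow_mul, ← zpow_add]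
    congr 1
    omega
  refine ⟨(n + 2) % 5 - 2, by omega, by omega, ?_⟩
  rcases hn with rfl | rfl
  · exact ⟨_, hsplit⟩
  · exact ⟨-sqrt2Unit ^ ((n + 2) / 5), by rw [hsplit, Odd.neg_pow (by decide), mul_neg]⟩

theorem exists_fifth_power_decomposition_general (b c d : ℤ)
    (hb : Odd b) (hd : Odd d) (hcop : Int.gcd b c = 1)
    (h : (-d) ^ 5 = b ^ 2 - 2 * c ^ 2) :
    ∃ j : ℤ, -2 ≤ j ∧ j ≤ 2 ∧ ∃ u v : ℤ, Int.gcd u v = 1 ∧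
      (⟨b, c⟩ : Zsqrtd 2) = (↑(sqrt2Unit ^ j) : Zsqrtd 2) * (⟨u, v⟩ : Zsqrtd 2) ^ 5 := by
  have hnorm : (⟨b, c⟩ : ℤ√2).norm = (-d) ^ 5 := by rw [h, Zsqrtd.norm_def]; ring
  have hcoprime : IsCoprime (⟨b, c⟩ : ℤ√2) (star ⟨b, c⟩) :=
    Zsqrtd.isCoprime_self_star
      ((Int.isCoprime_two_right.mpr hb).mul_right (Int.isCoprime_iff_gcd_eq_one.mpr hcop))
      (Int.isCoprime_two_left.mpr (hnorm ▸ hd.neg.pow))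
  obtain ⟨w, ε, hw⟩ := exists_associated_pow_of_mul_eq_pow' hcoprime
    (by rw [← Zsqrtd.norm_eq_mul_conj, hnorm, Int.cast_pow])
  obtain ⟨j, hj₁, hj₂, v, rfl⟩ := exists_eq_sqrt2Unit_zpow_mul_pow_five ε
  have hx : (⟨b, c⟩ : ℤ√2) = ↑(sqrt2Unit ^ j) * (w * v) ^ 5 := by
    rw [← hw]; push_cast; ring
  have hdvd : w * v ∣ (⟨b, c⟩ : ℤ√2) :=
    (dvd_pow_self _ (by norm_num)).trans (Dvd.intro_left _ hx.symm)
  exact ⟨j, hj₁, hj₂, (w * v).re, (w * v).im, Zsqrtd.gcd_re_im_eq_one_of_dvd hdvd hcop, hx⟩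

/-- If `b, c, d` are odd integers with `gcd(b,c) = 1` and `(-d)⁵ = b² - 2c²`,
then `b + c√2 = (1+√2)^j (u+v√2)⁵` for some `-2 ≤ j ≤ 2` and coprime `u, v`. -/
theorem exists_fifth_power_decomposition (b c d : ℤ)
    (hb : Odd b) (hc : Odd c) (hd : Odd d) (hcop : Int.gcd b c = 1)
    (h : (-d) ^ 5 = b ^ 2 - 2 * c ^ 2) :
    ∃ j : ℤ, -2 ≤ j ∧ j ≤ 2 ∧ ∃ u v : ℤ, Int.gcd u v = 1 ∧
      (⟨b, c⟩ : Zsqrtd 2) = (↑(sqrt2Unit ^ j) : Zsqrtd 2) * (⟨u, v⟩ : Zsqrtd 2) ^ 5 :=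
  exists_fifth_power_decomposition_general b c d hb hd hcop h
end

section
/- There is no pair of rational numbers (x, y) with y^2 = 2x^{10} + 55x^8 + 680x^6 + 1160x^4 + 640x^2 - 16. -/
/-!
Write `x = a / b` in lowest terms. Then `b¹⁰ f₀(x) = 2 (a P)² - (b Q)²` with
`P = a⁴ + 20a²b² + 20b⁴` and `Q = 5a⁴ + 20a²b² + 4b⁴`, so a rational point gives an integer `c`
with `c² = 2 (a P)² - (b Q)²`. If `a` or `b` is even this fails 2-adically (modulo 128, resp. 4).
If both are odd, then `Q ≡ 5 (mod 8)` and `a P` is prime to `Q`, while `c² ≡ 2 (a P)² (mod Q)`;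
so the Jacobi symbol `(2 / Q)` would be `1`, whereas the second supplementary law makes it `-1`.
-/

theorem IsCoprime.of_linear_combinations {R : Type*} [CommRing R] {x y a b m : R}
    (hab : IsCoprime a b) (hmy : IsCoprime m y)
    (ha : ∃ u v, u * x + v * y = m * a) (hb : ∃ u v, u * x + v * y = m * b) :
    IsCoprime x y := by
  obtain ⟨s, t, hst⟩ := hab
  obtain ⟨p, q, hpq⟩ := hmy
  obtain ⟨u₁, v₁, h₁⟩ := ha
  obtain ⟨u₂, v₂, h₂⟩ := hb
  exact ⟨p * (s * u₁ + t * u₂), p * (s * v₁ + t * v₂) + q, by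
    linear_combination p * s * h₁ + p * t * h₂ + p * m * hst + hpq⟩

theorem Int.not_sq_modEq_two_mul_sq {n : ℕ} (hn : n % 8 = 3 ∨ n % 8 = 5) {A : ℤ}
    (hA : IsCoprime A n) (c : ℤ) : ¬ c ^ 2 ≡ 2 * A ^ 2 [ZMOD n] := by
  intro h
  have hJ : jacobiSym (2 * A ^ 2) n = -1 := by
    rw [jacobiSym.mul_left, jacobiSym.at_two (Nat.odd_iff.2 (by omega)),
      jacobiSym.sq_one' (Int.isCoprime_iff_gcd_eq_one.1 hA), ZMod.χ₈_nat_eq_if_mod_eight]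
    omega
  rw [← jacobiSym.mod_left' h, jacobiSym.pow_left] at hJ
  nlinarith [sq_nonneg (jacobiSym c n)]

theorem Int.sq_ne_two_mul_sq_sub_sq_of_odd_of_even {A B : ℤ} (hA : Odd A) (hB : Even B)
    (c : ℤ) : c ^ 2 ≠ 2 * A ^ 2 - B ^ 2 := by
  obtain ⟨m, rfl⟩ := hA
  obtain ⟨n, rfl⟩ := hB
  intro h
  have hmod4 : ∀ m n c : ZMod 4, c ^ 2 ≠ 2 * (2 * m + 1) ^ 2 - (n + n) ^ 2 := by decide
  exact hmod4 m n c (by exact_mod_cast congrArg (Int.cast : ℤ → ZMod 4) h)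

theorem Int.sq_ne_two_mul_sq_sub_sq_of_odd (A : ℤ) {B : ℤ} (hB : Odd B) (c : ℤ) :
    c ^ 2 ≠ 2 * (8 * A) ^ 2 - (4 * B) ^ 2 := by
  intro h
  obtain ⟨d, rfl⟩ : 4 ∣ c :=
    (Int.pow_dvd_pow_iff two_ne_zero).1 ⟨8 * A ^ 2 - B ^ 2, by rw [h]; ring⟩
  obtain ⟨m, rfl⟩ := hB
  have hmod8 : ∀ A m d : ZMod 8, d ^ 2 ≠ 8 * A ^ 2 - (2 * m + 1) ^ 2 := by decide
  have hd : d ^ 2 = 8 * A ^ 2 - (2 * m + 1) ^ 2 := by linarith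
  exact hmod8 A m d (by exact_mod_cast congrArg (Int.cast : ℤ → ZMod 8) hd)

namespace C0

def P (a b : ℤ) : ℤ := a ^ 4 + 20 * a ^ 2 * b ^ 2 + 20 * b ^ 4

def Q (a b : ℤ) : ℤ := 5 * a ^ 4 + 20 * a ^ 2 * b ^ 2 + 4 * b ^ 4

def F (a b : ℤ) : ℤ := 2 * (a * P a b) ^ 2 - (b * Q a b) ^ 2

theorem eval_eq_F_div {x : ℚ} {a b : ℤ} (hb : b ≠ 0) (hx : x = a / b) :
    2 * x ^ 10 + 55 * x ^ 8 + 680 * x ^ 6 + 1160 * x ^ 4 + 640 * x ^ 2 - 16 = F a b / b ^ 10 := by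
  subst hx
  simp only [F, P, Q]
  field_simp
  push_cast
  ring

theorem isSquare_F_of_eq {x y : ℚ}
    (h : y ^ 2 = 2 * x ^ 10 + 55 * x ^ 8 + 680 * x ^ 6 + 1160 * x ^ 4 + 640 * x ^ 2 - 16) :
    IsSquare (F x.num x.den) := by
  have hden : (x.den : ℤ) ≠ 0 := by exact_mod_cast x.den_nz
  rw [eval_eq_F_div (a := x.num) hden (by rw [Int.cast_natCast, Rat.num_div_den])] at h
  rw [← Rat.isSquare_intCast_iff]
  refine ⟨y * (x.den : ℤ) ^ 5, ?_⟩
  field_simp at h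
  linear_combination -h

theorem Q_emod_eight {a b : ℤ} (ha : Odd a) (hb : Odd b) : Q a b % 8 = 5 := by
  obtain ⟨s, rfl⟩ := ha
  obtain ⟨t, rfl⟩ := hb
  have hmod8 : ∀ s t : ZMod 8,
      5 * (2 * s + 1) ^ 4 + 20 * (2 * s + 1) ^ 2 * (2 * t + 1) ^ 2 + 4 * (2 * t + 1) ^ 4 = 5 := by
    decide
  simpa using (ZMod.intCast_eq_intCast_iff' (Q _ _) 5 8).1 (by push_cast [Q]; exact hmod8 s t)

theorem odd_P {a : ℤ} (ha : Odd a) (b : ℤ) : Odd (P a b) := by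
  rw [show P a b = a ^ 4 + 2 * (10 * a ^ 2 * b ^ 2 + 10 * b ^ 4) by simp only [P]; ring]
  exact ha.pow.add_even (even_two_mul _)

theorem Q_nonneg (a b : ℤ) : 0 ≤ Q a b := by
  simp only [Q]; positivity

theorem odd_Q {a : ℤ} (ha : Odd a) (b : ℤ) : Odd (Q a b) := by
  rw [show Q a b = a ^ 4 + 2 * (2 * a ^ 4 + 10 * a ^ 2 * b ^ 2 + 2 * b ^ 4) by simp only [Q]; ring]
  exact ha.pow.add_even (even_two_mul _)

theorem isCoprime_P_Q {a b : ℤ} (hab : IsCoprime a b) (ha : Odd a) :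
    IsCoprime (P a b) (Q a b) := by
  -- `P` and `Q` are quadratic forms in `a², b²` with resultant `-2¹⁴`: eliminating either
  -- variable puts `2¹⁰ a⁶` and `2¹⁰ b⁶` in the ideal `(P, Q)`.
  refine (hab.pow (m := 6) (n := 6)).of_linear_combinations
    (m := 2 ^ 10) (Int.isCoprime_two_left.2 (odd_Q ha b)).pow_left
    ⟨-(47 * a ^ 2 + 10 * b ^ 2) * 8, (35 * a ^ 2 + 50 * b ^ 2) * 8, ?_⟩
    ⟨25 * a ^ 2 + 70 * b ^ 2, -(5 * a ^ 2 + 94 * b ^ 2), ?_⟩ <;> simp only [P, Q] <;> ring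

theorem isCoprime_mul_P_Q {a b : ℤ} (hab : IsCoprime a b) (ha : Odd a) :
    IsCoprime (a * P a b) (Q a b) := by
  refine IsCoprime.mul_left ?_ (isCoprime_P_Q hab ha)
  have h4 : IsCoprime a (2 ^ 2 * b ^ 4) :=
    (Int.isCoprime_two_right.2 ha).pow_right.mul_right hab.pow_right
  rw [show Q a b = 2 ^ 2 * b ^ 4 + a * (5 * a ^ 3 + 20 * a * b ^ 2) by simp only [Q]; ring]
  exact h4.add_mul_left_right _

theorem not_isSquare_F_of_even_left {a b : ℤ} (hab : IsCoprime a b) (ha : Even a) :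
    ¬ IsSquare (F a b) := by
  have hb : Odd b := Int.not_even_iff_odd.1 fun hb =>
    absurd (hab.isUnit_of_dvd' ha.two_dvd hb.two_dvd) (by decide)
  obtain ⟨k, rfl⟩ := ha
  rintro ⟨c, hc⟩
  refine Int.sq_ne_two_mul_sq_sub_sq_of_odd (k * (4 * k ^ 4 + 20 * k ^ 2 * b ^ 2 + 5 * b ^ 4))
    (B := b * (b ^ 4 + 2 * (10 * k ^ 4 + 10 * k ^ 2 * b ^ 2))) ?_ c ?_
  · exact hb.mul (hb.pow.add_even (even_two_mul _))
  · rw [sq, ← hc]; simp only [F, P, Q]; ring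

theorem not_isSquare_F_of_even_right {a b : ℤ} (ha : Odd a) (hb : Even b) :
    ¬ IsSquare (F a b) := by
  rintro ⟨c, hc⟩
  exact Int.sq_ne_two_mul_sq_sub_sq_of_odd_of_even (ha.mul (odd_P ha b)) (hb.mul_right _) c
    (by rw [sq, ← hc, F])

theorem not_isSquare_F_of_odd_of_odd {a b : ℤ} (hab : IsCoprime a b) (ha : Odd a) (hb : Odd b) :
    ¬ IsSquare (F a b) := by
  rintro ⟨c, hc⟩
  obtain ⟨n, hn⟩ := Int.eq_ofNat_of_zero_le (Q_nonneg a b)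
  refine Int.not_sq_modEq_two_mul_sq (n := n) ?_ (hn ▸ isCoprime_mul_P_Q hab ha) c ?_
  · have := Q_emod_eight ha hb
    omega
  · rw [← hn, Int.modEq_iff_dvd]
    exact ⟨b ^ 2 * Q a b, by rw [sq c, ← hc, F]; ring⟩

end C0

/-- The hyperelliptic curve `C₀ : y² = 2x¹⁰ + 55x⁸ + 680x⁶ + 1160x⁴ + 640x² - 16`
has no affine rational points. -/
theorem no_rational_points_C0 :
    ¬ ∃ x y : ℚ, y ^ 2 =
        2 * x ^ 10 + 55 * x ^ 8 + 680 * x ^ 6 + 1160 * x ^ 4 + 640 * x ^ 2 - 16 := by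
  rintro ⟨x, y, h⟩
  have hcop : IsCoprime x.num x.den := Int.isCoprime_iff_gcd_eq_one.2 x.reduced
  have hsq := C0.isSquare_F_of_eq h
  rcases Int.even_or_odd x.num with ha | ha
  · exact C0.not_isSquare_F_of_even_left hcop ha hsq
  rcases Int.even_or_odd (x.den : ℤ) with hb | hb
  · exact C0.not_isSquare_F_of_even_right ha hb hsq
  · exact C0.not_isSquare_F_of_odd_of_odd hcop ha hb hsq
end

section
/- The polynomial x^{10} + 30x^9 + 215x^8 + 720x^7 + 1840x^6 + 3024x^5 + 3880x^4 + 2880x^3 + 1520x^2 + 480x + 112 is irreducible over Q. -/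
/-!
Since `f₁` is monic, Gauss's lemma reduces its irreducibility over `ℚ` to that of its reduction
modulo `11`. Over `𝔽_q` we use Rabin's test: an irreducible factor of degree `d` divides
`X ^ q ^ m - X` exactly when `d ∣ m`, so a polynomial of degree `n` dividing `X ^ q ^ n - X` and
coprime to `X ^ q ^ (n / r) - X` for every prime `r ∣ n` is irreducible. For `n = 10`, `q = 11`
both conditions are read off the orbit of a root `a` of `f₁` under `x ↦ x ^ 11` in
`𝔽₁₁[X] ⧸ (f₁)`. That map is additive and fixes integers modulo `11`, so once the powers
`a ^ (11 * i)`, `i < 10`, are reduced modulo `f₁` it acts linearly on reduced expressions, and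
`a ^ 11 ^ k` is computed for `k ≤ 10` without ever reducing a polynomial of large degree.
-/

open Polynomial

namespace Polynomial

variable {K : Type*} [Field K] [Finite K]

theorem irreducible_of_dvd_X_pow_card_pow_sub_X_of_isCoprime {f : K[X]} (hf : 0 < f.natDegree)
    (hdvd : f ∣ X ^ Nat.card K ^ f.natDegree - X)
    (hcop : ∀ r, r.Prime → r ∣ f.natDegree →
      IsCoprime f (X ^ Nat.card K ^ (f.natDegree / r) - X)) :
    Irreducible f := by
  have hf0 : f ≠ 0 := ne_zero_of_natDegree_gt hf
  obtain ⟨g, hg, hgf⟩ := WfDvdMonoid.exists_irreducible_factor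
    (fun hu => (natDegree_eq_zero_of_isUnit hu).not_gt hf) hf0
  suffices hdeg : f.natDegree ≤ g.natDegree from
    (associated_of_dvd_of_natDegree_le hgf hf0 hdeg).irreducible hg
  obtain ⟨m, hm⟩ := hg.natDegree_dvd_of_dvd_X_pow_card_pow_sub_X (hgf.trans hdvd)
  by_contra! hlt
  obtain ⟨r, hr, s, rfl⟩ := Nat.exists_prime_and_dvd (show m ≠ 1 by rintro rfl; omega)
  have hg_dvd : g ∣ X ^ Nat.card K ^ (f.natDegree / r) - X := by
    refine hg.natDegree_dvd_iff_dvd_X_pow_card_pow_sub_X.mp ⟨s, ?_⟩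
    rw [hm, mul_left_comm, Nat.mul_div_cancel_left _ hr.pos]
  have hr_dvd : r ∣ f.natDegree := ⟨g.natDegree * s, by rw [hm]; ring⟩
  exact hg.not_isUnit ((hcop r hr hr_dvd).isUnit_of_dvd' hgf hg_dvd)

theorem _root_.AdjoinRoot.isCoprime_of_isUnit_mk {R : Type*} [CommRing R] {f g : R[X]}
    (h : IsUnit (AdjoinRoot.mk f g)) : IsCoprime f g := by
  obtain ⟨u, hu⟩ := h.exists_right_inv
  obtain ⟨u, rfl⟩ := AdjoinRoot.mk_surjective u
  rw [← map_mul, ← map_one (AdjoinRoot.mk f), AdjoinRoot.mk_eq_mk] at hu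
  obtain ⟨w, hw⟩ := hu
  exact ⟨-w, u, by linear_combination hw⟩

theorem irreducible_of_root_pow_card_pow {f : K[X]} (hf : 0 < f.natDegree)
    (hfix : AdjoinRoot.root f ^ Nat.card K ^ f.natDegree = AdjoinRoot.root f)
    (hunit : ∀ r, r.Prime → r ∣ f.natDegree →
      IsUnit (AdjoinRoot.root f ^ Nat.card K ^ (f.natDegree / r) - AdjoinRoot.root f)) :
    Irreducible f := by
  refine irreducible_of_dvd_X_pow_card_pow_sub_X_of_isCoprime hf ?_ fun r hr hrn => ?_
  · rw [← AdjoinRoot.mk_eq_zero, map_sub, map_pow, AdjoinRoot.mk_X, hfix, sub_self]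
  · refine AdjoinRoot.isCoprime_of_isUnit_mk ?_
    rw [map_sub, map_pow, AdjoinRoot.mk_X]
    exact hunit r hr hrn

theorem Monic.irreducible_map_rat_of_irreducible_map {S : Type*} [CommRing S] [IsDomain S]
    (φ : ℤ →+* S) {f : ℤ[X]} (hf : f.Monic) (h : Irreducible (f.map φ)) :
    Irreducible (f.map (Int.castRingHom ℚ)) :=
  (IsPrimitive.Int.irreducible_iff_irreducible_map_cast hf.isPrimitive).mp
    (hf.irreducible_of_irreducible_map φ f h)

end Polynomial

instance fact_prime_eleven : Fact (Nat.Prime 11) := ⟨by norm_num⟩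

noncomputable def f₁ : ℤ[X] :=
  X ^ 10 + 30 * X ^ 9 + 215 * X ^ 8 + 720 * X ^ 7 + 1840 * X ^ 6 + 3024 * X ^ 5 + 3880 * X ^ 4 +
    2880 * X ^ 3 + 1520 * X ^ 2 + 480 * X + 112

theorem f₁_monic : f₁.Monic := by
  unfold f₁
  monicity!

theorem f₁_natDegree : f₁.natDegree = 10 := by
  unfold f₁
  compute_degree!

theorem aeval_f₁ {R : Type*} [CommRing R] (a : R) :
    aeval a f₁ = a ^ 10 + 30 * a ^ 9 + 215 * a ^ 8 + 720 * a ^ 7 + 1840 * a ^ 6 + 3024 * a ^ 5 +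
      3880 * a ^ 4 + 2880 * a ^ 3 + 1520 * a ^ 2 + 480 * a + 112 := by
  simp only [f₁, map_add, map_mul, map_pow, aeval_X, map_ofNat]

namespace f₁Mod11

variable {R : Type*} [CommRing R] [CharP R 11] {a : R}

/- Each reduction modulo `f₁` is checked by `linear_combination q * ha`, where `q` is the quotient
of the division by `f₁` over `𝔽₁₁`; `reduce_mod_char!` then discards the multiples of `11`. -/

theorem pow_11 (ha : aeval a f₁ = 0) :
    a ^ 11 = 3 * a ^ 9 + 10 * a ^ 8 + 4 * a ^ 7 + 3 * a ^ 6 + 6 * a ^ 5 + 4 * a ^ 3 + 9 * a ^ 2 +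
        10 * a + 5 := by
  rw [aeval_f₁] at ha
  linear_combination (norm := ring_nf) (a + 3) * ha
  reduce_mod_char!

theorem pow_22 (ha : aeval a f₁ = 0) :
    a ^ 22 = 4 * a ^ 9 + 7 * a ^ 8 + 7 * a ^ 7 + 4 * a ^ 6 + 5 * a ^ 5 + 2 * a ^ 4 + 10 * a ^ 3 +
        4 * a ^ 2 + 9 * a := by
  rw [show a ^ 22 = a ^ 11 * a ^ 11 by ring, pow_11 ha]
  rw [aeval_f₁] at ha
  linear_combination (norm := ring_nf) (9 * a ^ 8 + 10 * a ^ 7 + a ^ 6 + 7 * a ^ 5 + 6 * a ^ 4 +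
      6 * a ^ 3 + 7 * a ^ 2 + 10 * a + 7) * ha
  reduce_mod_char!

theorem pow_33 (ha : aeval a f₁ = 0) :
    a ^ 33 = 4 * a ^ 9 + 3 * a ^ 8 + 3 * a ^ 7 + 5 * a ^ 6 + 3 * a ^ 5 + 4 * a ^ 4 + 7 * a ^ 3 +
        10 * a ^ 2 + 9 * a + 2 := by
  rw [show a ^ 33 = a ^ 22 * a ^ 11 by ring, pow_22 ha, pow_11 ha]
  rw [aeval_f₁] at ha
  linear_combination (norm := ring_nf) (a ^ 8 + 9 * a ^ 7 + 7 * a ^ 6 + 7 * a ^ 5 + 4 * a ^ 4 +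
      6 * a ^ 2 + 5 * a + 10) * ha
  reduce_mod_char!

theorem pow_44 (ha : aeval a f₁ = 0) :
    a ^ 44 = 10 * a ^ 8 + 8 * a ^ 7 + a ^ 6 + 8 * a ^ 4 + 3 * a ^ 3 + 6 * a ^ 2 + a + 10 := by
  rw [show a ^ 44 = a ^ 33 * a ^ 11 by ring, pow_33 ha, pow_11 ha]
  rw [aeval_f₁] at ha
  linear_combination (norm := ring_nf) (a ^ 8 + 8 * a ^ 7 + 7 * a ^ 6 + 4 * a ^ 5 + 9 * a ^ 4 +
      a ^ 3 + 8 * a ^ 2 + 10 * a) * ha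
  reduce_mod_char!

theorem pow_55 (ha : aeval a f₁ = 0) :
    a ^ 55 = 10 * a ^ 9 + 2 * a ^ 7 + a ^ 6 + 10 * a ^ 5 + 5 * a ^ 4 + 4 * a ^ 3 + 3 * a ^ 2 +
        5 * a + 3 := by
  rw [show a ^ 55 = a ^ 44 * a ^ 11 by ring, pow_44 ha, pow_11 ha]
  rw [aeval_f₁] at ha
  linear_combination (norm := ring_nf) (8 * a ^ 7 + 5 * a ^ 6 + 2 * a ^ 5 + 8 * a ^ 4 + 9 * a ^ 3 +
      3 * a ^ 2 + 9 * a + 7) * ha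
  reduce_mod_char!

theorem pow_66 (ha : aeval a f₁ = 0) :
    a ^ 66 = 3 * a ^ 8 + 7 * a ^ 7 + 5 * a ^ 6 + 9 * a ^ 5 + 3 * a ^ 4 + 8 * a ^ 3 + 7 * a := by
  rw [show a ^ 66 = a ^ 55 * a ^ 11 by ring, pow_55 ha, pow_11 ha]
  rw [aeval_f₁] at ha
  linear_combination (norm := ring_nf) (8 * a ^ 8 + 3 * a ^ 7 + 7 * a ^ 6 + 5 * a ^ 5 + 9 * a ^ 4 +
      9 * a ^ 3 + a ^ 2 + 6 * a + 2) * ha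
  reduce_mod_char!

theorem pow_77 (ha : aeval a f₁ = 0) :
    a ^ 77 = 9 * a ^ 9 + a ^ 8 + 9 * a ^ 7 + a ^ 6 + 5 * a ^ 5 + 10 * a ^ 4 + 2 * a ^ 3 +
        9 * a ^ 2 + a + 7 := by
  rw [show a ^ 77 = a ^ 66 * a ^ 11 by ring, pow_66 ha, pow_11 ha]
  rw [aeval_f₁] at ha
  linear_combination (norm := ring_nf) (9 * a ^ 7 + a ^ 6 + 2 * a ^ 5 + 3 * a ^ 4 + 2 * a ^ 3 +
      10 * a ^ 2 + 10 * a + 2) * ha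
  reduce_mod_char!

theorem pow_88 (ha : aeval a f₁ = 0) :
    a ^ 88 = a ^ 9 + 10 * a ^ 8 + 8 * a ^ 7 + 6 * a ^ 6 + 8 * a ^ 5 + 2 * a ^ 4 + 5 * a ^ 3 +
        4 * a ^ 2 + 5 * a + 1 := by
  rw [show a ^ 88 = a ^ 77 * a ^ 11 by ring, pow_77 ha, pow_11 ha]
  rw [aeval_f₁] at ha
  linear_combination (norm := ring_nf) (5 * a ^ 8 + 9 * a ^ 7 + 4 * a ^ 6 + 2 * a ^ 5 + 7 * a ^ 4 +
      7 * a ^ 3 + 2 * a ^ 2 + 3 * a + 6) * ha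
  reduce_mod_char!

theorem pow_99 (ha : aeval a f₁ = 0) :
    a ^ 99 = 2 * a ^ 9 + 6 * a ^ 8 + 9 * a ^ 7 + 5 * a ^ 6 + 3 * a ^ 5 + 6 * a ^ 4 + 3 * a ^ 3 +
        7 * a + 6 := by
  rw [show a ^ 99 = a ^ 88 * a ^ 11 by ring, pow_88 ha, pow_11 ha]
  rw [aeval_f₁] at ha
  linear_combination (norm := ring_nf) (3 * a ^ 8 + 5 * a ^ 7 + 4 * a ^ 6 + 9 * a ^ 5 + 9 * a ^ 3 +
      2 * a + 5) * ha
  reduce_mod_char!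

theorem pow_eleven_pow_two (ha : aeval a f₁ = 0) :
    a ^ 11 ^ 2 = 7 * a ^ 9 + 9 * a ^ 8 + 5 * a ^ 7 + 10 * a ^ 6 + 5 * a ^ 5 + 8 * a ^ 4 +
        9 * a ^ 3 + 7 * a ^ 2 + 2 * a + 5 := by
  rw [sq, pow_mul, pow_11 ha]
  simp only [add_pow_char, mul_pow, ← pow_mul, pow_11 ha, pow_22 ha, pow_33 ha, pow_55 ha,
      pow_66 ha, pow_77 ha, pow_88 ha, pow_99 ha]
  linear_combination (norm := ring_nf)
  reduce_mod_char!

theorem pow_eleven_pow_five (ha : aeval a f₁ = 0) :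
    a ^ 11 ^ 5 = 8 * a ^ 9 + 10 * a ^ 8 + 8 * a ^ 7 + 8 * a ^ 6 + 3 * a ^ 5 + 2 * a ^ 4 + a ^ 3 +
        2 * a ^ 2 + 8 * a + 9 := by
  have p3 : a ^ 11 ^ 3 = a ^ 9 + 2 * a ^ 8 + a ^ 7 + 5 * a ^ 6 + 2 * a ^ 5 + 4 * a ^ 4 +
      5 * a ^ 2 + 3 * a + 5 := by
    rw [pow_succ, pow_mul, pow_eleven_pow_two ha]
    simp only [add_pow_char, mul_pow, ← pow_mul, pow_11 ha, pow_22 ha, pow_33 ha, pow_44 ha,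
        pow_55 ha, pow_66 ha, pow_77 ha, pow_88 ha, pow_99 ha]
    linear_combination (norm := ring_nf)
    reduce_mod_char!
  have p4 : a ^ 11 ^ 4 = 7 * a ^ 9 + 4 * a ^ 8 + 9 * a ^ 7 + a ^ 6 + 10 * a ^ 4 + 5 * a ^ 3 +
      6 * a ^ 2 + 10 * a + 4 := by
    rw [pow_succ, pow_mul, p3]
    simp only [add_pow_char, mul_pow, ← pow_mul, pow_11 ha, pow_22 ha, pow_44 ha, pow_55 ha,
        pow_66 ha, pow_77 ha, pow_88 ha, pow_99 ha]
    linear_combination (norm := ring_nf)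
    reduce_mod_char!
  rw [pow_succ, pow_mul, p4]
  simp only [add_pow_char, mul_pow, ← pow_mul, pow_11 ha, pow_22 ha, pow_33 ha, pow_44 ha,
      pow_66 ha, pow_77 ha, pow_88 ha, pow_99 ha]
  linear_combination (norm := ring_nf)
  reduce_mod_char!

theorem pow_eleven_pow_ten (ha : aeval a f₁ = 0) :
    a ^ 11 ^ 10 = a := by
  have p6 : a ^ 11 ^ 6 = 10 * a ^ 9 + 10 * a ^ 7 + 3 * a ^ 6 + 10 * a ^ 5 + 2 * a ^ 4 + 3 * a ^ 2 +
      8 * a + 7 := by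
    rw [pow_succ, pow_mul, pow_eleven_pow_five ha]
    simp only [add_pow_char, mul_pow, ← pow_mul, pow_11 ha, pow_22 ha, pow_33 ha, pow_44 ha,
        pow_55 ha, pow_66 ha, pow_77 ha, pow_88 ha, pow_99 ha]
    linear_combination (norm := ring_nf)
    reduce_mod_char!
  have p7 : a ^ 11 ^ 7 = 4 * a ^ 9 + 2 * a ^ 8 + 4 * a ^ 7 + 2 * a ^ 6 + 6 * a ^ 5 + 10 * a ^ 4 +
      6 * a ^ 3 + 7 * a ^ 2 + 7 * a + 7 := by
    rw [pow_succ, pow_mul, p6]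
    simp only [add_pow_char, mul_pow, ← pow_mul, pow_11 ha, pow_22 ha, pow_44 ha, pow_55 ha,
        pow_66 ha, pow_77 ha, pow_99 ha]
    linear_combination (norm := ring_nf)
    reduce_mod_char!
  have p8 : a ^ 11 ^ 8 = 3 * a ^ 9 + 5 * a ^ 8 + 3 * a ^ 7 + 9 * a ^ 6 + a ^ 5 + 2 * a ^ 4 +
      9 * a ^ 3 + 9 * a ^ 2 + 8 * a + 6 := by
    rw [pow_succ, pow_mul, p7]
    simp only [add_pow_char, mul_pow, ← pow_mul, pow_11 ha, pow_22 ha, pow_33 ha, pow_44 ha,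
        pow_55 ha, pow_66 ha, pow_77 ha, pow_88 ha, pow_99 ha]
    linear_combination (norm := ring_nf)
    reduce_mod_char!
  have p9 : a ^ 11 ^ 9 = a ^ 9 + 2 * a ^ 8 + 3 * a ^ 6 + 6 * a ^ 4 + 10 * a ^ 3 + 7 * a ^ 2 +
      9 * a + 10 := by
    rw [pow_succ, pow_mul, p8]
    simp only [add_pow_char, mul_pow, ← pow_mul, pow_11 ha, pow_22 ha, pow_33 ha, pow_44 ha,
        pow_55 ha, pow_66 ha, pow_77 ha, pow_88 ha, pow_99 ha]
    linear_combination (norm := ring_nf)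
    reduce_mod_char!
  rw [pow_succ, pow_mul, p9]
  simp only [add_pow_char, mul_pow, ← pow_mul, pow_11 ha, pow_22 ha, pow_33 ha, pow_44 ha,
      pow_66 ha, pow_88 ha, pow_99 ha]
  linear_combination (norm := ring_nf)
  reduce_mod_char!

theorem isUnit_pow_eleven_pow_two_sub (ha : aeval a f₁ = 0) : IsUnit (a ^ 11 ^ 2 - a) := by
  rw [pow_eleven_pow_two ha]
  rw [aeval_f₁] at ha
  refine IsUnit.of_mul_eq_one (3 * a ^ 9 + 8 * a ^ 8 + 4 * a ^ 7 + 7 * a ^ 6 + a ^ 5 + 7 * a ^ 3 +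
      9 * a ^ 2 + a + 8) ?_
  linear_combination (norm := ring_nf) (10 * a ^ 8 + 3 * a ^ 7 + 9 * a ^ 6 + 4 * a ^ 5 +
      10 * a ^ 4 + 7 * a ^ 2 + 7 * a + 3) * ha
  reduce_mod_char!

theorem isUnit_pow_eleven_pow_five_sub (ha : aeval a f₁ = 0) : IsUnit (a ^ 11 ^ 5 - a) := by
  rw [pow_eleven_pow_five ha]
  rw [aeval_f₁] at ha
  refine IsUnit.of_mul_eq_one (4 * a ^ 9 + 6 * a ^ 8 + 5 * a ^ 7 + 4 * a ^ 6 + 6 * a ^ 4 +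
      6 * a ^ 2 + 3 * a + 4) ?_
  linear_combination (norm := ring_nf) (10 * a ^ 8 + 8 * a ^ 7 + 8 * a ^ 6 + 4 * a ^ 3 +
      6 * a ^ 2 + 2 * a + 1) * ha
  reduce_mod_char!

end f₁Mod11

theorem irreducible_map_f₁_zmod_eleven : Irreducible (f₁.map (Int.castRingHom (ZMod 11))) := by
  set g := f₁.map (Int.castRingHom (ZMod 11))
  have hg : g.natDegree = 10 := by rw [f₁_monic.natDegree_map, f₁_natDegree]
  have : CharP (AdjoinRoot g) 11 :=
    charP_of_injective_algebraMap (AdjoinRoot.of.injective_of_degree_ne_zero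
      (by rw [degree_eq_natDegree (f₁_monic.map _).ne_zero, hg]; decide)) 11
  have ha : aeval (AdjoinRoot.root g) f₁ = 0 := by
    rw [← aeval_map_algebraMap (ZMod 11), algebraMap_int_eq, AdjoinRoot.aeval_eq,
      AdjoinRoot.mk_self]
  refine irreducible_of_root_pow_card_pow (by omega) ?_ fun r hr hr10 => ?_
  · rw [hg, Nat.card_zmod]
    exact f₁Mod11.pow_eleven_pow_ten ha
  rw [hg] at hr10 ⊢
  rw [Nat.card_zmod]
  obtain rfl | rfl : r = 2 ∨ r = 5 := by
    have := Nat.le_of_dvd (by norm_num) hr10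
    interval_cases r <;> first | omega | norm_num at hr
  · exact f₁Mod11.isUnit_pow_eleven_pow_five_sub ha
  · exact f₁Mod11.isUnit_pow_eleven_pow_two_sub ha

/-- The polynomial `f₁` is irreducible over `ℚ`. -/
theorem F1_irreducible :
    Irreducible (X ^ 10 + 30 * X ^ 9 + 215 * X ^ 8 + 720 * X ^ 7 + 1840 * X ^ 6 +
      3024 * X ^ 5 + 3880 * X ^ 4 + 2880 * X ^ 3 + 1520 * X ^ 2 + 480 * X + 112 :
      Polynomial ℚ) := by
  convert f₁_monic.irreducible_map_rat_of_irreducible_map _ irreducible_map_f₁_zmod_eleven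
  simp only [f₁, Polynomial.map_add, Polynomial.map_mul, Polynomial.map_pow, Polynomial.map_X,
    Polynomial.map_ofNat]
end

section
/- If b and c are odd coprime integers and j ∈ {-2,...,2}, u,v ∈ Z satisfy b + c√2 = (1+√2)^j (u+v√2)^5, then u is odd, v ≡ j+1 (mod 2), and gcd(u,v) = 1. -/
/-!
Reduce modulo 2 in `ℤ[√2]`: since `√2² = 2`, the quotient `ℤ[√2]/(2)` is the ring of dual numbers
`𝔽₂[ε]`, with `√2 ↦ ε`. There `b + c√2 ↦ 1 + ε`, the unit `(1+√2)^j ↦ 1 + jε`, and for odd `n`,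
`(u + vε)ⁿ = uⁿ + n uⁿ⁻¹ v ε`, so comparing coefficients gives `u ≡ 1` and `v ≡ j + 1`.
Coprimality is independent of this: `gcd(u, v)` divides `u + v√2`, hence `b + c√2`, hence `gcd(b, c)`.
-/

open DualNumber TrivSqZeroExt

namespace Zsqrtd

theorem gcd_re_im_dvd_of_dvd {d : ℤ} {x z : ℤ√d} (hxz : x ∣ z) :
    Int.gcd x.re x.im ∣ Int.gcd z.re z.im := by
  have hx : ((Int.gcd x.re x.im : ℤ) : ℤ√d) ∣ x :=
    (intCast_dvd _ _).2 ⟨Int.gcd_dvd_left _ _, Int.gcd_dvd_right _ _⟩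
  obtain ⟨hre, him⟩ := (intCast_dvd _ _).1 (hx.trans hxz)
  exact Int.ofNat_dvd.1 (Int.dvd_coe_gcd hre him)

def toDualZModTwo : ℤ√2 →+* (ZMod 2)[ε] :=
  lift ⟨ε, by rw [eps_mul_eps]; rfl⟩

theorem toDualZModTwo_apply (z : ℤ√2) :
    toDualZModTwo z = inl (z.re : ZMod 2) + inr (z.im : ZMod 2) := by
  simp [toDualZModTwo, inr_eq_smul_eps, Algebra.smul_def]

theorem toDualZModTwo_sqrt2Unit_zpow (j : ℤ) :
    toDualZModTwo ↑(sqrt2Unit ^ j) = inl 1 + inr (j : ZMod 2) := by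
  induction j using Int.induction_on with
  | zero => simp
  | succ k ih =>
    rw [zpow_add_one, Units.val_mul, map_mul, ih, toDualZModTwo_apply]
    ext <;> simp [sqrt2Unit, add_comm]
  | pred k ih =>
    rw [zpow_sub_one, Units.val_mul, map_mul, ih, toDualZModTwo_apply]
    ext <;> simp [sqrt2Unit, CharTwo.sub_eq_add, add_comm]

end Zsqrtd

theorem DualNumber.zmodTwo_eq_of_one_add_eps_eq_mul_pow {n : ℕ} (hn : Odd n) (j u v : ZMod 2)
    (h : (inl 1 + inr 1 : (ZMod 2)[ε]) = (inl 1 + inr j) * (inl u + inr v) ^ n) :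
    u = 1 ∧ v = j + 1 := by
  have hfst := congrArg fst h
  have hsnd := congrArg snd h
  simp only [fst_add, fst_mul, fst_pow, fst_inl, fst_inr, snd_add, DualNumber.snd_mul, snd_pow,
    snd_inl, snd_inr, add_zero, zero_add, one_mul] at hfst hsnd
  obtain rfl : u = 1 := by
    rcases (by decide : ∀ x : ZMod 2, x = 0 ∨ x = 1) u with rfl | rfl
    · simp [zero_pow hn.pos.ne'] at hfst
    · rfl
  have hn2 : (n : ZMod 2) = 1 := ZMod.natCast_eq_one_iff_odd.2 hn
  simp only [one_pow, nsmul_eq_mul, hn2, one_mul, mul_one, one_smul] at hsnd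
  exact ⟨rfl, by grind⟩

theorem parity_and_coprimality_of_uv_general (b c : ℤ) (hb : Odd b) (hc : Odd c)
    (hcop : Int.gcd b c = 1) (j u v : ℤ)
    (h : (⟨b, c⟩ : Zsqrtd 2) =
      (↑(sqrt2Unit ^ j) : Zsqrtd 2) * (⟨u, v⟩ : Zsqrtd 2) ^ 5) :
    Odd u ∧ Int.ModEq 2 v (j + 1) ∧ Int.gcd u v = 1 := by
  have hmod := congrArg Zsqrtd.toDualZModTwo h
  rw [map_mul, map_pow, Zsqrtd.toDualZModTwo_sqrt2Unit_zpow, Zsqrtd.toDualZModTwo_apply,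
    Zsqrtd.toDualZModTwo_apply, hb.intCast_zmod_two, hc.intCast_zmod_two] at hmod
  obtain ⟨hu, hv⟩ :=
    DualNumber.zmodTwo_eq_of_one_add_eps_eq_mul_pow (by decide : Odd 5) _ _ _ hmod
  have hdvd : Int.gcd u v ∣ Int.gcd b c :=
    Zsqrtd.gcd_re_im_dvd_of_dvd (h ▸ dvd_mul_of_dvd_right (dvd_pow_self _ (by norm_num)) _)
  refine ⟨ZMod.intCast_eq_one_iff_odd.1 hu,
    (ZMod.intCast_eq_intCast_iff _ _ _).1 (by push_cast; exact hv), ?_⟩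
  rwa [hcop, Nat.dvd_one] at hdvd

/-- If `b` and `c` are odd coprime integers and
`b + c√2 = (1+√2)^j (u+v√2)⁵` with `-2 ≤ j ≤ 2`, then `u` is odd,
`v ≡ j + 1 (mod 2)`, and `gcd(u,v) = 1`. -/
theorem parity_and_coprimality_of_uv (b c : ℤ) (hb : Odd b) (hc : Odd c)
    (hcop : Int.gcd b c = 1) (j u v : ℤ) (hj1 : -2 ≤ j) (hj2 : j ≤ 2)
    (h : (⟨b, c⟩ : Zsqrtd 2) =
      (↑(sqrt2Unit ^ j) : Zsqrtd 2) * (⟨u, v⟩ : Zsqrtd 2) ^ 5) :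
    Odd u ∧ Int.ModEq 2 v (j + 1) ∧ Int.gcd u v = 1 :=
  parity_and_coprimality_of_uv_general b c hb hc hcop j u v h
end
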